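/- If φ ∈ AA(Y), then the function 𝔅φ defined by (𝔅φ)(t) := ∫_{−∞}^{t} 𝒞(t−s) φ(s) ds belongs to AA(X). -/

import Mathlib

open Filter Topology MeasureTheory

/-- Almost automorphic functions. -/
def AlmostAutomorphic {Z : Type*} [NormedAddCommGroup Z] (f : ℝ → Z) : Prop :=
  Continuous f ∧
    ∀ s' : ℕ → ℝ, ∃ (k : ℕ → ℕ) (g : ℝ → Z), StrictMono k ∧
      (∀ t : ℝ, Tendsto (fun n => f (t + s' (k n))) atTop (𝓝 (g t))) ∧
      (∀ t : ℝ, Tendsto (fun n => g (t - s' (k n))) atTop (𝓝 (f t)))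

lemma AlmostAutomorphic.bounded {Z : Type*} [NormedAddCommGroup Z] {f : ℝ → Z}
    (hf : AlmostAutomorphic f) : ∃ M : ℝ, 0 ≤ M ∧ ∀ t, ‖f t‖ ≤ M := by
  by_contra h
  push_neg at h
  choose s hs using fun n : ℕ => h n (Nat.cast_nonneg n)
  obtain ⟨k, g, hk, h1, h2⟩ := hf.2 s
  have hT : Tendsto (fun n => ‖f (0 + s (k n))‖) atTop atTop := by
    refine tendsto_atTop_mono (fun n => ?_) tendsto_natCast_atTop_atTop
    calc (n : ℝ) ≤ (k n : ℝ) := Nat.cast_le.2 hk.le_apply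
    _ ≤ ‖f (s (k n))‖ := (hs (k n)).le
    _ = ‖f (0 + s (k n))‖ := by rw [zero_add]
  exact not_tendsto_nhds_of_tendsto_atTop hT _ ((h1 0).norm)

section Aux

variable {X Y : Type*}
    [NormedAddCommGroup X] [NormedSpace ℂ X] [CompleteSpace X]
    [NormedAddCommGroup Y] [NormedSpace ℂ Y] [CompleteSpace Y]
    {C : ℝ → Y →L[ℂ] X} {ρ : ℝ → ℝ}

lemma aux_meas_simple
    (hmeas : ∀ y : Y, AEStronglyMeasurable (fun t => C t y)
      (volume.restrict (Set.Ioi (0 : ℝ)))) (ψ : SimpleFunc ℝ Y) :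
    AEStronglyMeasurable (fun r => C r (ψ r)) (volume.restrict (Set.Ioi (0:ℝ))) := by
  induction ψ using MeasureTheory.SimpleFunc.induction with
  | @const c s hs =>
      have : (fun r => C r ((SimpleFunc.piecewise s hs (SimpleFunc.const ℝ c)
          (SimpleFunc.const ℝ (0:Y))) r)) = Set.indicator s (fun r => C r c) := by
        ext r
        by_cases h : r ∈ s <;>
          simp [SimpleFunc.piecewise_apply, h, Set.indicator_apply]
      rw [this]
      exact (hmeas c).indicator hs
  | @add f g _ hf hg =>
      have : (fun r => C r ((f + g) r)) = fun r => C r (f r) + C r (g r) := by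
        ext r; simp [map_add]
      rw [this]; exact hf.add hg

lemma aux_meas
    (hmeas : ∀ y : Y, AEStronglyMeasurable (fun t => C t y)
      (volume.restrict (Set.Ioi (0 : ℝ))))
    (f : ℝ → Y) (hf : StronglyMeasurable f) :
    AEStronglyMeasurable (fun r => C r (f r)) (volume.restrict (Set.Ioi (0:ℝ))) := by
  refine aestronglyMeasurable_of_tendsto_ae (atTop : Filter ℕ)
    (fun n => aux_meas_simple hmeas (hf.approx n)) ?_
  refine Eventually.of_forall fun r => ?_
  exact ((C r).continuous.tendsto _).comp (hf.tendsto_approx r)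

lemma aux_int
    (hmeas : ∀ y : Y, AEStronglyMeasurable (fun t => C t y)
      (volume.restrict (Set.Ioi (0 : ℝ))))
    (hρint : IntegrableOn ρ (Set.Ioi (0 : ℝ)))
    (hρnonneg : ∀ t : ℝ, 0 ≤ ρ t)
    (hbound : ∀ t > (0 : ℝ), ∀ y : Y, ‖C t y‖ ≤ ρ t * ‖y‖)
    (f : ℝ → Y) (hf : StronglyMeasurable f) (M : ℝ)
    (hM : ∀ r, ‖f r‖ ≤ M) :
    IntegrableOn (fun r => C r (f r)) (Set.Ioi (0:ℝ)) := by
  refine Integrable.mono' (hρint.mul_const M) (aux_meas hmeas f hf) ?_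
  filter_upwards [ae_restrict_mem measurableSet_Ioi] with r hr
  calc ‖C r (f r)‖ ≤ ρ r * ‖f r‖ := hbound r hr _
  _ ≤ ρ r * M := mul_le_mul_of_nonneg_left (hM r) (hρnonneg r)

lemma aux_tendsto
    (hmeas : ∀ y : Y, AEStronglyMeasurable (fun t => C t y)
      (volume.restrict (Set.Ioi (0 : ℝ))))
    (hρint : IntegrableOn ρ (Set.Ioi (0 : ℝ)))
    (hρnonneg : ∀ t : ℝ, 0 ≤ ρ t)
    (hbound : ∀ t > (0 : ℝ), ∀ y : Y, ‖C t y‖ ≤ ρ t * ‖y‖)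
    (f : ℕ → ℝ → Y) (g : ℝ → Y)
    (hfm : ∀ n, StronglyMeasurable (f n)) (M : ℝ)
    (hfM : ∀ n r, ‖f n r‖ ≤ M)
    (hlim : ∀ r, Tendsto (fun n => f n r) atTop (𝓝 (g r))) :
    Tendsto (fun n => ∫ r in Set.Ioi (0:ℝ), C r (f n r)) atTop
      (𝓝 (∫ r in Set.Ioi (0:ℝ), C r (g r))) := by
  refine tendsto_integral_of_dominated_convergence (fun r => ρ r * M)
    (fun n => aux_meas hmeas _ (hfm n)) (hρint.mul_const M) ?_ ?_
  · intro n
    filter_upwards [ae_restrict_mem measurableSet_Ioi] with r hr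
    calc ‖C r (f n r)‖ ≤ ρ r * ‖f n r‖ := hbound r hr _
    _ ≤ ρ r * M := mul_le_mul_of_nonneg_left (hfM n r) (hρnonneg r)
  · refine Eventually.of_forall fun r => ?_
    exact ((C r).continuous.tendsto _).comp (hlim r)

lemma aux_change (f : ℝ → Y) (t : ℝ) :
    ∫ s in Set.Iic t, C (t - s) (f s) = ∫ r in Set.Ioi (0:ℝ), C r (f (t - r)) := by
  have h1 : ∫ r in Set.Ioi (0:ℝ), C r (f (t - r))
      = ∫ r in Set.Ioi (0:ℝ), (fun s => C (t - s) (f s)) (t - r) := by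
    refine setIntegral_congr_fun measurableSet_Ioi fun r _ => ?_
    simp [sub_sub_cancel]
  have h2 := (Measure.measurePreserving_sub_left (volume : Measure ℝ) t).setIntegral_image_emb
      (Homeomorph.subLeft t).measurableEmbedding (fun s => C (t - s) (f s)) (Set.Ioi 0)
  have h3 : (fun r : ℝ => t - r) '' Set.Ioi 0 = Set.Iio t := by
    rw [Set.image_const_sub_Ioi, sub_zero]
  rw [h1, ← h2, h3]
  exact (setIntegral_congr_set Iio_ae_eq_Iic).symm

end Aux

/-- If `φ ∈ AA(Y)`, then `(𝔅φ)(t) = ∫_{-∞}^t 𝒞(t-s) φ(s) ds` belongs to `AA(X)`. -/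
theorem convolution_operator_almostAutomorphic {X Y : Type*}
    [NormedAddCommGroup X] [NormedSpace ℂ X] [CompleteSpace X]
    [NormedAddCommGroup Y] [NormedSpace ℂ Y] [CompleteSpace Y]
    (C : ℝ → Y →L[ℂ] X)
    (hmeas : ∀ y : Y, AEStronglyMeasurable (fun t => C t y)
      (volume.restrict (Set.Ioi (0 : ℝ))))
    (ρ : ℝ → ℝ) (hρint : IntegrableOn ρ (Set.Ioi (0 : ℝ)))
    (hρnonneg : ∀ t : ℝ, 0 ≤ ρ t)
    (hbound : ∀ t > (0 : ℝ), ∀ y : Y, ‖C t y‖ ≤ ρ t * ‖y‖)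
    (φ : ℝ → Y) (hφ : AlmostAutomorphic φ) :
    AlmostAutomorphic (fun t => ∫ s in Set.Iic t, C (t - s) (φ s)) := by
  obtain ⟨M, hM0, hM⟩ := hφ.bounded
  obtain ⟨hcont, hAA⟩ := hφ
  have key : (fun t => ∫ s in Set.Iic t, C (t - s) (φ s))
      = fun t => ∫ r in Set.Ioi (0:ℝ), C r (φ (t - r)) := funext fun t => aux_change φ t
  rw [key]
  constructor
  · refine continuous_of_dominated (F := fun t r => C r (φ (t - r)))
      (bound := fun r => ρ r * M)
      (fun t => aux_meas hmeas _
        ((hcont.comp (continuous_const.sub continuous_id)).stronglyMeasurable))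
      (fun t => ?_) (hρint.mul_const M) ?_
    · filter_upwards [ae_restrict_mem measurableSet_Ioi] with r hr
      calc ‖C r (φ (t - r))‖ ≤ ρ r * ‖φ (t - r)‖ := hbound r hr _
      _ ≤ ρ r * M := mul_le_mul_of_nonneg_left (hM _) (hρnonneg r)
    · refine Eventually.of_forall fun r => ?_
      exact (C r).continuous.comp (hcont.comp (continuous_id.sub continuous_const))
  · intro s'
    obtain ⟨k, g, hk, h1, h2⟩ := hAA s'
    have hgm : StronglyMeasurable g := by
      refine stronglyMeasurable_of_tendsto (atTop : Filter ℕ)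
        (f := fun n t => φ (t + s' (k n)))
        (fun n => (hcont.comp (continuous_id.add continuous_const)).stronglyMeasurable) ?_
      rw [tendsto_pi_nhds]; exact h1
    have hgM : ∀ t, ‖g t‖ ≤ M := fun t =>
      le_of_tendsto (h1 t).norm (Eventually.of_forall fun n => hM _)
    refine ⟨k, fun t => ∫ r in Set.Ioi (0:ℝ), C r (g (t - r)), hk, fun t => ?_, fun t => ?_⟩
    · have := aux_tendsto hmeas hρint hρnonneg hbound
        (fun n r => φ (t + s' (k n) - r)) (fun r => g (t - r))
        (fun n => (hcont.comp (continuous_const.sub continuous_id)).stronglyMeasurable) M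
        (fun n r => hM _) (fun r => by simpa [sub_add_eq_add_sub] using h1 (t - r))
      exact this
    · have := aux_tendsto hmeas hρint hρnonneg hbound
        (fun n r => g (t - s' (k n) - r)) (fun r => φ (t - r))
        (fun n => hgm.comp_measurable (measurable_const.sub measurable_id)) M
        (fun n r => hgM _) (fun r => by simpa [sub_right_comm] using h2 (t - r))
      exact this
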